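/- Let X be a random vector with the permutation distribution on (1, 2, …, n), let 1 ≤ k < n, and let ψ: ℝ^{n−k} → ℝ be a bounded, coordinatewise increasing, symmetric function. Then for fixed r_2, …, r_k, the conditional expectation E[ψ(X_{k+1}, …, X_n) | X_1 = r_1, X_2 ≥ r_2, …, X_k ≥ r_k] is decreasing in r_1 ∈ {1,…,n}, over those r_1 for which the conditioning event has positive probability. -/

import Mathlib

open scoped Classical
open Finset

noncomputable section

/-- Probability of the event `A` on a finite sample space with weights `w`. -/
def Pr {Ω : Type*} [Fintype Ω] (w : Ω → ℝ) (A : Ω → Prop) : ℝ :=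
  ∑ ω : Ω, if A ω then w ω else 0

/-- Expectation of `f` on a finite sample space with weights `w`. -/
def Expec {Ω : Type*} [Fintype Ω] (w : Ω → ℝ) (f : Ω → ℝ) : ℝ :=
  ∑ ω : Ω, w ω * f ω

/-- Conditional expectation of `f` given the event `A` under weights `w`. -/
def CExp {Ω : Type*} [Fintype Ω] (w : Ω → ℝ) (A : Ω → Prop) (f : Ω → ℝ) : ℝ :=
  (∑ ω : Ω, if A ω then w ω * f ω else 0) / Pr w A

/-- `[X_I | A] ≤_st [X_I | B]` : the conditional distribution of the subvector `X_I`
given the event `A` is dominated, in the usual stochastic order, by the conditional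
distribution of `X_I` given `B`; i.e. conditional expectations of every bounded
coordinatewise increasing function compare. -/
def CondSubvecStochLE {Ω : Type*} [Fintype Ω] {n : ℕ} (w : Ω → ℝ)
    (X : Ω → Fin n → ℝ) (I : Finset (Fin n)) (A B : Ω → Prop) : Prop :=
  ∀ φ : ({i : Fin n // i ∈ I} → ℝ) → ℝ, Monotone φ → (∃ C, ∀ v, |φ v| ≤ C) →
    CExp w A (fun ω => φ fun i => X ω i.1) ≤ CExp w B (fun ω => φ fun i => X ω i.1)

/-- Negative regression dependence: `[X_I | X_J = x_J] ≥_st [X_I | X_J = x_J*]`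
whenever `x_J ≤ x_J*` componentwise and both conditioning events have
positive probability. -/
def IsNRD {Ω : Type*} [Fintype Ω] {n : ℕ} (w : Ω → ℝ) (X : Ω → Fin n → ℝ) : Prop :=
  ∀ I J : Finset (Fin n), Disjoint I J → ∀ x y : Fin n → ℝ, (∀ j ∈ J, x j ≤ y j) →
    0 < Pr w (fun ω => ∀ j ∈ J, X ω j = x j) →
    0 < Pr w (fun ω => ∀ j ∈ J, X ω j = y j) →
    CondSubvecStochLE w X I (fun ω => ∀ j ∈ J, X ω j = y j)
      (fun ω => ∀ j ∈ J, X ω j = x j)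

/-- Negative left-tail dependence: `[X_I | X_J ≤ x_J] ≥_st [X_I | X_J ≤ x_J*]`
whenever `x_J ≤ x_J*` componentwise and both conditioning events have
positive probability. -/
def IsNLTD {Ω : Type*} [Fintype Ω] {n : ℕ} (w : Ω → ℝ) (X : Ω → Fin n → ℝ) : Prop :=
  ∀ I J : Finset (Fin n), Disjoint I J → ∀ x y : Fin n → ℝ, (∀ j ∈ J, x j ≤ y j) →
    0 < Pr w (fun ω => ∀ j ∈ J, X ω j ≤ x j) →
    0 < Pr w (fun ω => ∀ j ∈ J, X ω j ≤ y j) →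
    CondSubvecStochLE w X I (fun ω => ∀ j ∈ J, X ω j ≤ y j)
      (fun ω => ∀ j ∈ J, X ω j ≤ x j)

/-- Negative right-tail dependence: `[X_I | X_J > x_J] ≥_st [X_I | X_J > x_J*]`
whenever `x_J ≤ x_J*` componentwise and both conditioning events have
positive probability. -/
def IsNRTD {Ω : Type*} [Fintype Ω] {n : ℕ} (w : Ω → ℝ) (X : Ω → Fin n → ℝ) : Prop :=
  ∀ I J : Finset (Fin n), Disjoint I J → ∀ x y : Fin n → ℝ, (∀ j ∈ J, x j ≤ y j) →
    0 < Pr w (fun ω => ∀ j ∈ J, x j < X ω j) →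
    0 < Pr w (fun ω => ∀ j ∈ J, y j < X ω j) →
    CondSubvecStochLE w X I (fun ω => ∀ j ∈ J, y j < X ω j)
      (fun ω => ∀ j ∈ J, x j < X ω j)

/-- Negative association on a finite weighted sample space:
`Cov(ψ₁(X_{A₁}), ψ₂(X_{A₂})) ≤ 0` for disjoint `A₁, A₂` and bounded
coordinatewise increasing `ψ₁, ψ₂`. -/
def IsNAfin {Ω : Type*} [Fintype Ω] {n : ℕ} (w : Ω → ℝ) (X : Ω → Fin n → ℝ) : Prop :=
  ∀ A₁ A₂ : Finset (Fin n), Disjoint A₁ A₂ →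
    ∀ ψ₁ : ({i : Fin n // i ∈ A₁} → ℝ) → ℝ, ∀ ψ₂ : ({i : Fin n // i ∈ A₂} → ℝ) → ℝ,
      Monotone ψ₁ → Monotone ψ₂ → (∃ C, ∀ v, |ψ₁ v| ≤ C) → (∃ C, ∀ v, |ψ₂ v| ≤ C) →
      Expec w (fun ω => (ψ₁ fun i => X ω i.1) * (ψ₂ fun i => X ω i.1))
        ≤ Expec w (fun ω => ψ₁ fun i => X ω i.1) * Expec w (fun ω => ψ₂ fun i => X ω i.1)

/-- The uniform distribution on the permutations of `Fin n`. -/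
def unifPerm (n : ℕ) : Equiv.Perm (Fin n) → ℝ := fun _ => (Nat.factorial n : ℝ)⁻¹

/-- The random vector with the permutation distribution on `a`:
`X = (a_{σ(1)}, …, a_{σ(n)})` for a uniformly random permutation `σ`. -/
def permVec {n : ℕ} (a : Fin n → ℝ) (σ : Equiv.Perm (Fin n)) : Fin n → ℝ :=
  fun i => a (σ i)

/-!
Write the conditioning event as `{σ | σ p = y, σ i ∈ U i for i ∈ S}` with upper sets `U i`, and
let `F` be increasing in the coordinates outside `{p} ∪ S`. Composing with the transposition
`(x y)`, for `x ≤ y`, maps the event for `y` injectively into the event for `x` and raises the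
value at the position of `x` from `x` to `y`, hence raises `F`. Its image misses exactly the `τ`
that place `y` at some `q ∈ S` with `x ∉ U q`. For such a `q`, split the event for `y` by the
value `w` at `q`: then `x < w`, and once the positions `p` and `q` (which `F` does not see) are
exchanged, each piece compares with `{τ | τ p = x, τ q = y}` by induction on `#S`.
-/

open Equiv
open Function (update update_self update_of_ne update_comm)
open scoped BigOperators

/-- The average of `F` over `s` is at most its average over `t`; cross-multiplied, so that it
holds trivially when `s` or `t` is empty. -/
def AvgLE {β : Type*} (F : β → ℝ) (s t : Finset β) : Prop :=
  (∑ b ∈ s, F b) * #t ≤ (∑ b ∈ t, F b) * #s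

namespace AvgLE

variable {β γ : Type*} {F : β → ℝ} {s t : Finset β}

lemma empty_left : AvgLE F ∅ t := by simp [AvgLE]

lemma empty_right : AvgLE F s ∅ := by simp [AvgLE]

lemma union_right [DecidableEq β] {t₁ t₂ : Finset β} (hd : Disjoint t₁ t₂)
    (h₁ : AvgLE F s t₁) (h₂ : AvgLE F s t₂) : AvgLE F s (t₁ ∪ t₂) := by
  unfold AvgLE at *
  rw [sum_union hd, card_union_of_disjoint hd]
  push_cast
  linarith

lemma of_fiberwise_left [Fintype γ] [DecidableEq γ] (g : β → γ)
    (h : ∀ c, AvgLE F (s.filter (g · = c)) t) : AvgLE F s t := by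
  have hcard : (#s : ℝ) = ∑ c, (#(s.filter (g · = c)) : ℝ) := by
    exact_mod_cast card_eq_sum_card_fiberwise fun _ _ => mem_univ _
  unfold AvgLE at *
  rw [hcard, ← sum_fiberwise s g F, mul_sum, sum_mul]
  exact sum_le_sum fun c _ => h c

lemma of_fiberwise_right [Fintype γ] [DecidableEq γ] (g : β → γ)
    (h : ∀ c, AvgLE F s (t.filter (g · = c))) : AvgLE F s t := by
  have hcard : (#t : ℝ) = ∑ c, (#(t.filter (g · = c)) : ℝ) := by
    exact_mod_cast card_eq_sum_card_fiberwise fun _ _ => mem_univ _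
  unfold AvgLE at *
  rw [hcard, ← sum_fiberwise t g F, mul_sum, sum_mul]
  exact sum_le_sum fun c _ => h c

lemma map_left (e : β ↪ β) (he : ∀ b ∈ s, F (e b) = F b) (h : AvgLE F s t) :
    AvgLE F (s.map e) t := by
  unfold AvgLE at *
  rwa [sum_map, card_map, sum_congr rfl he]

lemma map_right_of_le (e : β ↪ β) (he : ∀ b ∈ s, F b ≤ F (e b)) : AvgLE F s (s.map e) := by
  unfold AvgLE
  rw [sum_map, card_map]
  exact mul_le_mul_of_nonneg_right (sum_le_sum he) (Nat.cast_nonneg _)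

lemma expect_le_expect (h : AvgLE F s t) (hs : s.Nonempty) (ht : t.Nonempty) :
    𝔼 b ∈ s, F b ≤ 𝔼 b ∈ t, F b := by
  rw [expect_eq_sum_div_card, expect_eq_sum_div_card,
    div_le_div_iff₀ (by exact_mod_cast hs.card_pos) (by exact_mod_cast ht.card_pos)]
  exact h

end AvgLE

section ConstrainedEquivs

variable {ι α : Type*} [Fintype ι] [DecidableEq ι] [Fintype α] [LinearOrder α]

def constrainedEquivs (U : ι → Set α) (S K : Finset ι) (c : ι → α) : Finset (ι ≃ α) :=
  univ.filter fun σ => (∀ i ∈ K, σ i = c i) ∧ ∀ i ∈ S, σ i ∈ U i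

variable (U : ι → Set α) {S K : Finset ι} {c : ι → α} {p q : ι} {x y : α}

lemma mem_constrainedEquivs {σ : ι ≃ α} :
    σ ∈ constrainedEquivs U S K c ↔ (∀ i ∈ K, σ i = c i) ∧ ∀ i ∈ S, σ i ∈ U i := by
  simp [constrainedEquivs]

lemma filter_apply_eq_constrainedEquivs (hq : q ∉ K) (w : α) :
    (constrainedEquivs U S K c).filter (· q = w) =
      constrainedEquivs U S (insert q K) (update c q w) := by
  ext σ
  simp only [mem_filter, mem_constrainedEquivs, forall_mem_insert, update_self]
  constructor
  · rintro ⟨⟨hK, hS⟩, hq'⟩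
    exact ⟨⟨hq', fun i hi => by rw [update_of_ne (ne_of_mem_of_not_mem hi hq), hK i hi]⟩, hS⟩
  · rintro ⟨⟨hq', hK⟩, hS⟩
    exact ⟨⟨fun i hi => by rw [hK i hi, update_of_ne (ne_of_mem_of_not_mem hi hq)], hS⟩, hq'⟩

lemma constrainedEquivs_erase (hq : q ∈ K) (hc : c q ∈ U q) :
    constrainedEquivs U (S.erase q) K c = constrainedEquivs U S K c := by
  ext σ
  simp only [mem_constrainedEquivs, mem_erase, and_congr_right_iff]
  intro hK
  refine ⟨fun hS i hi => ?_, fun hS i hi => hS i hi.2⟩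
  obtain rfl | hiq := eq_or_ne i q
  · rw [hK i hq]; exact hc
  · exact hS i ⟨hiq, hi⟩

lemma constrainedEquivs_eq_empty (hq : q ∈ K) (hqS : q ∈ S) (hc : c q ∉ U q) :
    constrainedEquivs U S K c = ∅ :=
  eq_empty_of_forall_notMem fun σ hσ => hc <| by
    obtain ⟨hK, hS⟩ := (mem_constrainedEquivs U).1 hσ
    simpa [hK q hq] using hS q hqS

lemma map_swap_positions_constrainedEquivs (hp : p ∈ K) (hq : q ∈ K) (hpS : p ∉ S)
    (hqS : q ∉ S) :
    (constrainedEquivs U S K c).map (equivCongr (swap p q) (Equiv.refl α)).toEmbedding =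
      constrainedEquivs U S K (c ∘ swap p q) := by
  ext τ
  have hKswap : ∀ i ∈ K, swap p q i ∈ K := fun i hi => by
    rcases eq_or_ne i p with rfl | hip
    · simpa using hq
    rcases eq_or_ne i q with rfl | hiq
    · simpa using hp
    · rwa [swap_apply_of_ne_of_ne hip hiq]
  have hSswap : ∀ i ∈ S, swap p q i = i := fun i hi =>
    swap_apply_of_ne_of_ne (ne_of_mem_of_not_mem hi hpS) (ne_of_mem_of_not_mem hi hqS)
  simp only [mem_map_equiv, mem_constrainedEquivs, equivCongr_symm, equivCongr_apply_apply,
    symm_swap, Equiv.refl_symm, Equiv.refl_apply, Function.comp_apply]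
  refine and_congr ⟨fun h i hi => ?_, fun h i hi => ?_⟩
    ⟨fun h i hi => by simpa [hSswap i hi] using h i hi,
      fun h i hi => by simpa [hSswap i hi] using h i hi⟩
  · simpa using h _ (hKswap i hi)
  · rw [h _ (hKswap i hi), swap_apply_self]

lemma map_swap_values_constrainedEquivs (hU : ∀ i, IsUpperSet (U i)) (hKS : Disjoint K S)
    (hp : p ∈ K) (hxy : x ≤ y) (hcx : ∀ i ∈ K, i ≠ p → c i ≠ x)
    (hcy : ∀ i ∈ K, i ≠ p → c i ≠ y) :
    (constrainedEquivs U S K (update c p y)).map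
        (equivCongr (Equiv.refl ι) (swap x y)).toEmbedding =
      (constrainedEquivs U S K (update c p x)).filter
        fun τ => τ.symm y ∈ S → x ∈ U (τ.symm y) := by
  ext τ
  simp only [mem_map_equiv, mem_filter, mem_constrainedEquivs, equivCongr_symm,
    equivCongr_apply_apply, symm_swap, Equiv.refl_symm, Equiv.refl_apply]
  have hpS : p ∉ S := disjoint_left.1 hKS hp
  constructor
  · rintro ⟨hK, hS⟩
    have hτp : τ p = x := by simpa [swap_apply_eq_iff] using hK p hp
    have hτK : ∀ i ∈ K, τ i = update c p x i := fun i hi => by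
      rcases eq_or_ne i p with rfl | hip
      · simpa using hτp
      · have := hK i hi
        rw [update_of_ne hip, swap_apply_eq_iff, swap_apply_of_ne_of_ne (hcx i hi hip)
          (hcy i hi hip)] at this
        rwa [update_of_ne hip]
    refine ⟨⟨hτK, fun i hi => ?_⟩, fun hq => ?_⟩
    · have hτi : τ i ≠ x := fun h => ne_of_mem_of_not_mem hi hpS (τ.injective (h.trans hτp.symm))
      have := hS i hi
      rcases eq_or_ne (τ i) y with h | hy
      · rw [h, swap_apply_right] at this; rw [h]; exact hU i hxy this
      · rwa [swap_apply_of_ne_of_ne hτi hy] at this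
    · simpa using hS _ hq
  · rintro ⟨⟨hK, hS⟩, hP⟩
    have hτp : τ p = x := by simpa using hK p hp
    refine ⟨fun i hi => ?_, fun i hi => ?_⟩
    · rcases eq_or_ne i p with rfl | hip
      · simp [hτp]
      · rw [hK i hi, update_of_ne hip, swap_apply_of_ne_of_ne (hcx i hi hip) (hcy i hi hip),
          update_of_ne hip]
    · have hτi : τ i ≠ x := fun h => ne_of_mem_of_not_mem hi hpS (τ.injective (h.trans hτp.symm))
      rcases eq_or_ne (τ i) y with h | hy
      · rw [h, swap_apply_right]
        rw [← τ.eq_symm_apply] at h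
        exact h ▸ hP (h ▸ hi)
      · rw [swap_apply_of_ne_of_ne hτi hy]; exact hS i hi

lemma filter_not_filter_symm_apply_eq (hKS : Disjoint K S) :
    ((constrainedEquivs U S K c).filter fun τ => ¬(τ.symm y ∈ S → x ∈ U (τ.symm y))).filter
        (·.symm y = q) =
      if q ∈ S ∧ x ∉ U q then constrainedEquivs U S (insert q K) (update c q y) else ∅ := by
  rw [filter_filter]
  split_ifs with hq
  · rw [← filter_apply_eq_constrainedEquivs U (disjoint_right.1 hKS hq.1)]
    refine filter_congr fun τ _ => ?_
    rw [Equiv.symm_apply_eq, eq_comm]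
    constructor
    · exact fun h => h.2
    · rintro rfl
      simpa using hq
  · refine filter_eq_empty_iff.2 fun τ _ ⟨hP, hτ⟩ => hq ?_
    simp only [Classical.not_imp] at hP
    exact hτ ▸ hP

lemma avgLE_constrainedEquivs_insert (hU : ∀ i, IsUpperSet (U i)) (F : (ι → α) → ℝ)
    (hp : p ∈ K) (hpS : p ∉ S) (hqK : q ∉ K) (hqS : q ∈ S) (hxq : x ∉ U q)
    (hF : ∀ g g' : ι → α, (∀ i, i ∉ K → i ∉ S → g i ≤ g' i) → F g ≤ F g')
    (ih : ∀ {c : ι → α} {w : α}, x ≤ w →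
      (∀ g g' : ι → α, (∀ i, i ∉ insert q K → i ∉ S.erase q → g i ≤ g' i) → F g ≤ F g') →
      AvgLE (fun σ : ι ≃ α => F σ) (constrainedEquivs U (S.erase q) (insert q K) (update c p w))
        (constrainedEquivs U (S.erase q) (insert q K) (update c p x))) :
    AvgLE (fun σ : ι ≃ α => F σ) (constrainedEquivs U S K (update c p y))
      (constrainedEquivs U S (insert q K) (update (update c p x) q y)) := by
  have hpq : p ≠ q := ne_of_mem_of_not_mem hp hqK
  refine .of_fiberwise_left (fun σ : ι ≃ α => σ q) fun w => ?_
  rw [filter_apply_eq_constrainedEquivs U hqK]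
  by_cases hw : w ∈ U q
  swap
  · rw [constrainedEquivs_eq_empty U (c := update (update c p y) q w) (mem_insert_self q K) hqS
      (by simpa using hw)]
    exact .empty_left
  by_cases hy : y ∈ U q
  swap
  · rw [constrainedEquivs_eq_empty U (c := update (update c p x) q y) (mem_insert_self q K) hqS
      (by simpa using hy)]
    exact .empty_right
  -- `F` sees neither `p` nor `q`, so `{σ p = y, σ q = w}` may be traded for `{σ p = w, σ q = y}`.
  have hswap : update (update c p y) q w = update (update c q y) p w ∘ swap p q := by
    funext i
    rcases eq_or_ne i p with rfl | hip
    · simp [hpq, hpq.symm]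
    rcases eq_or_ne i q with rfl | hiq
    · simp
    · simp [swap_apply_of_ne_of_ne hip hiq, hip, hiq]
  rw [← constrainedEquivs_erase U (c := update (update c p y) q w) (mem_insert_self q K)
      (by simpa using hw),
    ← constrainedEquivs_erase U (c := update (update c p x) q y) (mem_insert_self q K)
      (by simpa using hy),
    hswap, ← map_swap_positions_constrainedEquivs U (mem_insert_of_mem hp) (mem_insert_self q K)
      (fun h => hpS (mem_of_mem_erase h)) (notMem_erase q S), update_comm hpq x y c]
  have hF_swap (g : ι → α) : F (g ∘ swap p q) = F g := by
    have hg : ∀ i, i ∉ K → i ∉ S → (g ∘ swap p q) i = g i := fun i hiK hiS =>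
      congrArg g (swap_apply_of_ne_of_ne (ne_of_mem_of_not_mem hp hiK).symm
        (ne_of_mem_of_not_mem hqS hiS).symm)
    exact le_antisymm (hF _ _ fun i hiK hiS => (hg i hiK hiS).le)
      (hF _ _ fun i hiK hiS => (hg i hiK hiS).ge)
  refine .map_left _ (fun σ _ => hF_swap σ) (ih (not_le.1 fun h => hxq (hU q h hw)).le
    fun g g' h => hF g g' fun i hiK hiS => h i ?_ fun hi => hiS (mem_of_mem_erase hi))
  simp [hiK, (ne_of_mem_of_not_mem hqS hiS).symm]

theorem avgLE_constrainedEquivs_update (hU : ∀ i, IsUpperSet (U i)) (F : (ι → α) → ℝ)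
    (hKS : Disjoint K S) (hp : p ∈ K) (hxy : x ≤ y)
    (hF : ∀ g g' : ι → α, (∀ i, i ∉ K → i ∉ S → g i ≤ g' i) → F g ≤ F g') :
    AvgLE (fun σ : ι ≃ α => F σ) (constrainedEquivs U S K (update c p y))
      (constrainedEquivs U S K (update c p x)) := by
  induction S using Finset.strongInduction generalizing K c x y with
  | H S ih =>
  rcases (constrainedEquivs U S K (update c p y)).eq_empty_or_nonempty with hs | ⟨σ₀, hσ₀⟩
  · rw [hs]; exact .empty_left
  rcases (constrainedEquivs U S K (update c p x)).eq_empty_or_nonempty with ht | ⟨τ₀, hτ₀⟩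
  · rw [ht]; exact .empty_right
  have hc_ne : ∀ {z} {σ : ι ≃ α}, σ ∈ constrainedEquivs U S K (update c p z) →
      ∀ i ∈ K, i ≠ p → c i ≠ z := by
    intro z σ hσ i hi hip h
    obtain ⟨hK, -⟩ := (mem_constrainedEquivs U).1 hσ
    exact hip <| σ.injective <| by rw [hK i hi, hK p hp, update_of_ne hip, h, update_self]
  rw [← filter_union_filter_not_eq (p := fun τ : ι ≃ α => τ.symm y ∈ S → x ∈ U (τ.symm y))
    (constrainedEquivs U S K (update c p x))]
  refine .union_right (disjoint_filter_filter_not _ _ _) ?_ ?_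
  · rw [← map_swap_values_constrainedEquivs U hU hKS hp hxy (hc_ne hτ₀) (hc_ne hσ₀)]
    refine .map_right_of_le _ fun σ hσ => hF _ _ fun i hiK _ => ?_
    have hσi : σ i ≠ y := fun h => ne_of_mem_of_not_mem hp hiK <| σ.injective <| by
      rw [((mem_constrainedEquivs U).1 hσ).1 p hp, h, update_self]
    rcases eq_or_ne (σ i) x with h | hx
    · simpa [h] using hxy
    · simp [swap_apply_of_ne_of_ne hx hσi]
  refine .of_fiberwise_right (fun τ : ι ≃ α => τ.symm y) fun q => ?_
  rw [filter_not_filter_symm_apply_eq U hKS]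
  split_ifs with hq
  · obtain ⟨hqS, hxq⟩ := hq
    exact avgLE_constrainedEquivs_insert U hU F hp (disjoint_left.1 hKS hp)
      (disjoint_right.1 hKS hqS) hqS hxq hF fun hxw => ih (S.erase q) (erase_ssubset hqS)
        (disjoint_insert_left.2 ⟨notMem_erase q S, hKS.mono_right (erase_subset q S)⟩)
        (mem_insert_of_mem hp) hxw
  · exact .empty_right

end ConstrainedEquivs

lemma exists_of_Pr_pos {Ω : Type*} [Fintype Ω] {w : Ω → ℝ} {A : Ω → Prop}
    (h : 0 < Pr w A) : ∃ ω, A ω := by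
  by_contra! hA
  simp [Pr, hA] at h

lemma CExp_unifPerm {n : ℕ} (A : Perm (Fin n) → Prop) (f : Perm (Fin n) → ℝ) :
    CExp (unifPerm n) A f = 𝔼 σ ∈ univ.filter A, f σ := by
  have ha : (Nat.factorial n : ℝ)⁻¹ ≠ 0 := by positivity
  simp only [CExp, Pr, unifPerm, expect_eq_sum_div_card, ← sum_filter, ← mul_sum, sum_const,
    nsmul_eq_mul]
  rw [mul_comm _ (Nat.factorial n : ℝ)⁻¹, mul_div_mul_left _ _ ha]

/-- For `X` with the permutation distribution on `(1, 2, …, n)`,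
`1 ≤ k < n`, and `ψ` bounded, coordinatewise increasing and symmetric, the
conditional expectation `E[ψ(X_{k+1},…,X_n) | X_1 = r₁, X_2 ≥ r_2, …, X_k ≥ r_k]`
is decreasing in `r₁ ∈ {1,…,n}`, over those `r₁` for which the conditioning event
has positive probability. -/
theorem perm_condExp_decreasing_in_first_coordinate (n k : ℕ) (hk1 : 1 ≤ k) (hkn : k < n)
    (ψ : (Fin (n - k) → ℝ) → ℝ) (hmono : Monotone ψ)
    (r : Fin n → ℝ) (r₁ r₁' : ℕ) (h₂ : r₁ ≤ r₁')
    (hpos : 0 < Pr (unifPerm n) fun σ =>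
        permVec (fun i : Fin n => (i.1 + 1 : ℝ)) σ ⟨0, by omega⟩ = (r₁ : ℝ) ∧
        ∀ i : Fin n, 0 < i.1 → i.1 < k →
          r i ≤ permVec (fun i : Fin n => (i.1 + 1 : ℝ)) σ i)
    (hpos' : 0 < Pr (unifPerm n) fun σ =>
        permVec (fun i : Fin n => (i.1 + 1 : ℝ)) σ ⟨0, by omega⟩ = (r₁' : ℝ) ∧
        ∀ i : Fin n, 0 < i.1 → i.1 < k →
          r i ≤ permVec (fun i : Fin n => (i.1 + 1 : ℝ)) σ i) :
    CExp (unifPerm n)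
        (fun σ =>
          permVec (fun i : Fin n => (i.1 + 1 : ℝ)) σ ⟨0, by omega⟩ = (r₁' : ℝ) ∧
          ∀ i : Fin n, 0 < i.1 → i.1 < k →
            r i ≤ permVec (fun i : Fin n => (i.1 + 1 : ℝ)) σ i)
        (fun σ => ψ fun j => permVec (fun i : Fin n => (i.1 + 1 : ℝ)) σ
            ⟨k + j.1, by have := j.isLt; omega⟩)
      ≤ CExp (unifPerm n)
        (fun σ =>
          permVec (fun i : Fin n => (i.1 + 1 : ℝ)) σ ⟨0, by omega⟩ = (r₁ : ℝ) ∧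
          ∀ i : Fin n, 0 < i.1 → i.1 < k →
            r i ≤ permVec (fun i : Fin n => (i.1 + 1 : ℝ)) σ i)
        (fun σ => ψ fun j => permVec (fun i : Fin n => (i.1 + 1 : ℝ)) σ
            ⟨k + j.1, by have := j.isLt; omega⟩) := by
  obtain ⟨σ₀, hσ₀⟩ := exists_of_Pr_pos hpos
  obtain ⟨σ₁, hσ₁⟩ := exists_of_Pr_pos hpos'
  rw [CExp_unifPerm, CExp_unifPerm]
  refine AvgLE.expect_le_expect ?_ ⟨σ₁, by simpa using hσ₁⟩ ⟨σ₀, by simpa using hσ₀⟩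
  simp only [permVec] at hσ₀ hσ₁
  set p : Fin n := ⟨0, by omega⟩
  set S := univ.filter fun i : Fin n => 0 < i.1 ∧ i.1 < k
  let F (g : Fin n → Fin n) : ℝ := ψ fun j => (g ⟨k + j.1, by have := j.isLt; omega⟩ : ℝ) + 1
  have hF (g g' : Fin n → Fin n) (h : ∀ i ∉ ({p} : Finset (Fin n)), i ∉ S → g i ≤ g' i) :
      F g ≤ F g' := hmono fun j => by
    have := h ⟨k + j.1, by have := j.isLt; omega⟩ (by simp [p]; omega) (by simp [S])
    gcongr
    exact_mod_cast this
  have hU (i : Fin n) : IsUpperSet {v : Fin n | r i ≤ v.1 + 1} := fun v w hvw (hv : r i ≤ _) =>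
    show r i ≤ _ from hv.trans (by simpa using hvw)
  have hxy : σ₀ p ≤ σ₁ p := by
    have := hσ₀.1.trans_le ((Nat.cast_le.2 h₂).trans_eq hσ₁.1.symm)
    exact Fin.le_iff_val_le_val.2 (by exact_mod_cast le_of_add_le_add_right this)
  convert avgLE_constrainedEquivs_update _ hU F (c := id)
    (disjoint_singleton_left.2 (by simp [S, p])) (mem_singleton_self p) hxy hF using 2
  · rfl
  all_goals ext σ; simp [constrainedEquivs, permVec, S, ← hσ₀.1, ← hσ₁.1, Fin.val_inj]
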